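/- arXiv:2603.11507 — 10 statements merged into one kernel-verified Lean document; each statement's English description precedes it below -/
import Mathlib

section
/- Suppose S = I_m, the Hamiltonian matrices Ω_- and Ω_+ are purely imaginary, and the coupling matrices C_- and C_+ are real. Set C_q = C_- + C_+ and C_p = C_- - C_+. Then for every s ∈ ℂ such that s·I_{2n} - A is invertible, the matrices M_q(s) = s·I_n + i(Ω_- + Ω_+) + (1/2)·C_p⊤·C_q and M_p(s) = s·I_n + i(Ω_- - Ω_+) + (1/2)·C_q⊤·C_p are invertible, and the quadrature transfer function is block diagonal: G[s] = [[G_q[s], 0],[0, G_p[s]]], where G_q[s] = I_m - C_q·M_q(s)^{-1}·C_p⊤ and G_p[s] = I_m - C_p·M_p(s)^{-1}·C_q⊤. -/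
open Matrix Complex

noncomputable section

/-- Entrywise real part of a complex matrix, viewed as a complex matrix. -/
def reM {α β : Type*} (M : Matrix α β ℂ) : Matrix α β ℂ :=
  M.map fun z => (z.re : ℂ)

/-- Entrywise imaginary part of a complex matrix, viewed as a complex matrix. -/
def imM {α β : Type*} (M : Matrix α β ℂ) : Matrix α β ℂ :=
  M.map fun z => (z.im : ℂ)

/-- The quadrature scattering matrix `D = [[Re S, -Im S],[Im S, Re S]]`. -/
def QD {m : ℕ} (S : Matrix (Fin m) (Fin m) ℂ) :
    Matrix (Fin m ⊕ Fin m) (Fin m ⊕ Fin m) ℂ :=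
  fromBlocks (reM S) (-(imM S)) (imM S) (reM S)

/-- The quadrature coupling matrix
`C = [[Re(C₋+C₊), -Im(C₋-C₊)],[Im(C₋+C₊), Re(C₋-C₊)]]`. -/
def QC {m n : ℕ} (Cm Cp : Matrix (Fin m) (Fin n) ℂ) :
    Matrix (Fin m ⊕ Fin m) (Fin n ⊕ Fin n) ℂ :=
  fromBlocks (reM (Cm + Cp)) (-(imM (Cm - Cp))) (imM (Cm + Cp)) (reM (Cm - Cp))

/-- The quadrature input matrix
`B = -[[Re(C₋†-C₊†), -Im(C₋†-C₊†)],[Im(C₋†+C₊†), Re(C₋†+C₊†)]] · D`. -/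
def QB {m n : ℕ} (Cm Cp : Matrix (Fin m) (Fin n) ℂ) (S : Matrix (Fin m) (Fin m) ℂ) :
    Matrix (Fin n ⊕ Fin n) (Fin m ⊕ Fin m) ℂ :=
  -(fromBlocks (reM (Cmᴴ - Cpᴴ)) (-(imM (Cmᴴ - Cpᴴ)))
      (imM (Cmᴴ + Cpᴴ)) (reM (Cmᴴ + Cpᴴ)) * QD S)

/-- `JH = [[Im(Ω₋+Ω₊), Re(Ω₋-Ω₊)],[-Re(Ω₋+Ω₊), Im(Ω₋-Ω₊)]]`. -/
def QJH {n : ℕ} (Om Op : Matrix (Fin n) (Fin n) ℂ) :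
    Matrix (Fin n ⊕ Fin n) (Fin n ⊕ Fin n) ℂ :=
  fromBlocks (imM (Om + Op)) (reM (Om - Op)) (-(reM (Om + Op))) (imM (Om - Op))

/-- `𝕁ₖ = [[0, Iₖ],[-Iₖ, 0]]`. -/
def QJ (k : ℕ) : Matrix (Fin k ⊕ Fin k) (Fin k ⊕ Fin k) ℂ :=
  fromBlocks 0 1 (-1) 0

/-- `C♯ = -𝕁ₙ · C† · 𝕁ₘ`. -/
def QCsharp {m n : ℕ} (Cm Cp : Matrix (Fin m) (Fin n) ℂ) :
    Matrix (Fin n ⊕ Fin n) (Fin m ⊕ Fin m) ℂ :=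
  -(QJ n * (QC Cm Cp)ᴴ * QJ m)

/-- `A = JH - (1/2) · C♯ · C`. -/
def QA {m n : ℕ} (Cm Cp : Matrix (Fin m) (Fin n) ℂ) (Om Op : Matrix (Fin n) (Fin n) ℂ) :
    Matrix (Fin n ⊕ Fin n) (Fin n ⊕ Fin n) ℂ :=
  QJH Om Op - (1/2 : ℂ) • (QCsharp Cm Cp * QC Cm Cp)

/-- The quadrature transfer function `G[s] = D + C (sI - A)⁻¹ B`. -/
def QG {m n : ℕ} (Cm Cp : Matrix (Fin m) (Fin n) ℂ) (Om Op : Matrix (Fin n) (Fin n) ℂ)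
    (S : Matrix (Fin m) (Fin m) ℂ) (s : ℂ) :
    Matrix (Fin m ⊕ Fin m) (Fin m ⊕ Fin m) ℂ :=
  QD S + QC Cm Cp *
    (s • (1 : Matrix (Fin n ⊕ Fin n) (Fin n ⊕ Fin n) ℂ) - QA Cm Cp Om Op)⁻¹ * QB Cm Cp S

section Aux

variable {α β : Type*}

lemma reM_add (A B : Matrix α β ℂ) : reM (A + B) = reM A + reM B := by
  ext i j; simp [reM]

lemma reM_sub (A B : Matrix α β ℂ) : reM (A - B) = reM A - reM B := by
  ext i j; simp [reM]

lemma imM_add (A B : Matrix α β ℂ) : imM (A + B) = imM A + imM B := by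
  ext i j; simp [imM]

lemma imM_sub (A B : Matrix α β ℂ) : imM (A - B) = imM A - imM B := by
  ext i j; simp [imM]

lemma reM_of_real {A : Matrix α β ℂ} (h : imM A = 0) : reM A = A := by
  ext i j
  have h' : ((A i j).im : ℂ) = 0 := congrFun (congrFun h i) j
  have him : (A i j).im = 0 := by exact_mod_cast h'
  simp [reM, Complex.ext_iff, him]

lemma imM_of_imaginary {A : Matrix α β ℂ} (h : reM A = 0) :
    imM A = (-Complex.I) • A := by
  ext i j
  have h' : ((A i j).re : ℂ) = 0 := congrFun (congrFun h i) j
  have hre : (A i j).re = 0 := by exact_mod_cast h'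
  simp only [imM, Matrix.map_apply, Matrix.smul_apply, smul_eq_mul]
  simp [Complex.ext_iff, hre]

lemma conjTranspose_of_real {A : Matrix α β ℂ} (h : imM A = 0) : Aᴴ = Aᵀ := by
  ext i j
  have h' : ((A j i).im : ℂ) = 0 := congrFun (congrFun h j) i
  have him : (A j i).im = 0 := by exact_mod_cast h'
  simp [Matrix.conjTranspose_apply, Matrix.transpose_apply, Complex.ext_iff, him]

lemma imM_transpose (A : Matrix α β ℂ) : imM Aᵀ = (imM A)ᵀ := by
  ext i j; simp [imM]

lemma reM_one {k : ℕ} : reM (1 : Matrix (Fin k) (Fin k) ℂ) = 1 := by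
  ext i j; simp [reM, Matrix.one_apply, apply_ite]

lemma imM_one {k : ℕ} : imM (1 : Matrix (Fin k) (Fin k) ℂ) = 0 := by
  ext i j; simp [imM, Matrix.one_apply, apply_ite]

end Aux

/-- with S = Iₘ, Ω₋, Ω₊ purely imaginary and C₋, C₊ real, the
matrices M_q(s), M_p(s) are invertible and the quadrature transfer function is
block diagonal with the stated diagonal blocks. -/
theorem stmt0 {m n : ℕ} (Cm Cp : Matrix (Fin m) (Fin n) ℂ)
    (Om Op : Matrix (Fin n) (Fin n) ℂ)
    (hOmHerm : Omᴴ = Om) (hOpSymm : Opᵀ = Op)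
    (hOm : reM Om = 0) (hOp : reM Op = 0)
    (hCm : imM Cm = 0) (hCp : imM Cp = 0)
    (s : ℂ)
    (hs : IsUnit (s • (1 : Matrix (Fin n ⊕ Fin n) (Fin n ⊕ Fin n) ℂ) - QA Cm Cp Om Op)) :
    IsUnit (s • (1 : Matrix (Fin n) (Fin n) ℂ) + Complex.I • (Om + Op)
        + (1/2 : ℂ) • ((Cm - Cp)ᵀ * (Cm + Cp))) ∧
    IsUnit (s • (1 : Matrix (Fin n) (Fin n) ℂ) + Complex.I • (Om - Op)
        + (1/2 : ℂ) • ((Cm + Cp)ᵀ * (Cm - Cp))) ∧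
    QG Cm Cp Om Op 1 s =
      fromBlocks
        ((1 : Matrix (Fin m) (Fin m) ℂ) - (Cm + Cp) *
          (s • (1 : Matrix (Fin n) (Fin n) ℂ) + Complex.I • (Om + Op)
            + (1/2 : ℂ) • ((Cm - Cp)ᵀ * (Cm + Cp)))⁻¹ * (Cm - Cp)ᵀ)
        0 0
        ((1 : Matrix (Fin m) (Fin m) ℂ) - (Cm - Cp) *
          (s • (1 : Matrix (Fin n) (Fin n) ℂ) + Complex.I • (Om - Op)
            + (1/2 : ℂ) • ((Cm + Cp)ᵀ * (Cm - Cp)))⁻¹ * (Cm + Cp)ᵀ) := by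
  have hCqim : imM (Cm + Cp) = 0 := by rw [imM_add, hCm, hCp, add_zero]
  have hCdim : imM (Cm - Cp) = 0 := by rw [imM_sub, hCm, hCp, sub_zero]
  have hOq : reM (Om + Op) = 0 := by rw [reM_add, hOm, hOp, add_zero]
  have hOd : reM (Om - Op) = 0 := by rw [reM_sub, hOm, hOp, sub_zero]
  set Mq : Matrix (Fin n) (Fin n) ℂ :=
    s • (1 : Matrix (Fin n) (Fin n) ℂ) + Complex.I • (Om + Op)
      + (1/2 : ℂ) • ((Cm - Cp)ᵀ * (Cm + Cp)) with hMq
  set Mp : Matrix (Fin n) (Fin n) ℂ :=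
    s • (1 : Matrix (Fin n) (Fin n) ℂ) + Complex.I • (Om - Op)
      + (1/2 : ℂ) • ((Cm + Cp)ᵀ * (Cm - Cp)) with hMp
  have hQD : QD (1 : Matrix (Fin m) (Fin m) ℂ) = 1 := by
    rw [QD, reM_one, imM_one, neg_zero, fromBlocks_one]
  have hQC : QC Cm Cp = fromBlocks (Cm + Cp) 0 0 (Cm - Cp) := by
    rw [QC, reM_of_real hCqim, reM_of_real hCdim, hCqim, hCdim, neg_zero]
  have hQB : QB Cm Cp 1 = fromBlocks (-(Cm - Cp)ᵀ) 0 0 (-(Cm + Cp)ᵀ) := by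
    have h1 : Cmᴴ - Cpᴴ = (Cm - Cp)ᵀ := by
      rw [conjTranspose_of_real hCm, conjTranspose_of_real hCp, Matrix.transpose_sub]
    have h2 : Cmᴴ + Cpᴴ = (Cm + Cp)ᵀ := by
      rw [conjTranspose_of_real hCm, conjTranspose_of_real hCp, Matrix.transpose_add]
    have hdT : imM ((Cm - Cp)ᵀ) = 0 := by rw [imM_transpose, hCdim, Matrix.transpose_zero]
    have hqT : imM ((Cm + Cp)ᵀ) = 0 := by rw [imM_transpose, hCqim, Matrix.transpose_zero]
    rw [QB, hQD, Matrix.mul_one, h1, h2, reM_of_real hdT, reM_of_real hqT, hdT, hqT,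
      neg_zero, Matrix.fromBlocks_neg, neg_zero]
  have hCsharp : QCsharp Cm Cp = fromBlocks ((Cm - Cp)ᵀ) 0 0 ((Cm + Cp)ᵀ) := by
    rw [QCsharp, hQC, QJ, QJ, fromBlocks_conjTranspose,
      conjTranspose_of_real hCqim, conjTranspose_of_real hCdim]
    simp [fromBlocks_multiply, Matrix.fromBlocks_neg]
  have hJH : QJH Om Op
      = fromBlocks ((-Complex.I) • (Om + Op)) 0 0 ((-Complex.I) • (Om - Op)) := by
    rw [QJH, imM_of_imaginary hOq, imM_of_imaginary hOd, hOq, hOd, neg_zero]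
  have hSA : s • (1 : Matrix (Fin n ⊕ Fin n) (Fin n ⊕ Fin n) ℂ) - QA Cm Cp Om Op
      = fromBlocks Mq 0 0 Mp := by
    rw [QA, hCsharp, hQC, hJH, ← (fromBlocks_one : fromBlocks (1 : Matrix (Fin n) (Fin n) ℂ) 0 0 1 = 1),
      Matrix.fromBlocks_smul]
    simp only [fromBlocks_multiply, Matrix.fromBlocks_smul, Matrix.mul_zero, Matrix.zero_mul,
      add_zero, zero_add, smul_zero, sub_eq_add_neg, Matrix.fromBlocks_neg, neg_zero,
      Matrix.fromBlocks_add, neg_add_rev]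
    rw [fromBlocks_inj]
    refine ⟨?_, rfl, rfl, ?_⟩
    · rw [hMq, sub_eq_add_neg Cm Cp]; module
    · rw [hMp, sub_eq_add_neg Cm Cp]; module
  rw [hSA] at hs
  rw [Matrix.isUnit_fromBlocks_zero₂₁] at hs
  obtain ⟨hq, hp⟩ := hs
  refine ⟨hq, hp, ?_⟩
  rw [QG, hQD, hQC, hQB, hSA,
    Matrix.inv_fromBlocks_zero₂₁_of_isUnit_iff _ _ _ ⟨fun _ => hp, fun _ => hq⟩,
    ← (fromBlocks_one : fromBlocks (1 : Matrix (Fin m) (Fin m) ℂ) 0 0 1 = 1)]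
  simp only [Matrix.mul_zero, Matrix.zero_mul, neg_zero, fromBlocks_multiply,
    add_zero, zero_add, Matrix.fromBlocks_add, Matrix.mul_neg]
  rw [fromBlocks_inj]
  exact ⟨(sub_eq_add_neg _ _).symm, rfl, rfl, (sub_eq_add_neg _ _).symm⟩
end
end

section
/- Suppose the scattering matrix S is real, the Hamiltonian matrices Ω_- and Ω_+ are purely imaginary, and the coupling matrices C_- and C_+ are either both real or both purely imaginary. Then for every s ∈ ℂ such that s·I_{2n} - A is invertible, the off-diagonal blocks of the quadrature transfer function vanish: G_qp[s] = 0 and G_pq[s] = 0; i.e., BAE measurements of q_out with respect to p_in and of p_out with respect to q_in are realized. -/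
open Matrix Complex

noncomputable section

namespace BAEaux

lemma entry_im {α β : Type*} {M : Matrix α β ℂ} (h : imM M = 0) (i : α) (j : β) :
    (M i j).im = 0 := by
  have := congrFun (congrFun h i) j
  simpa [imM, Matrix.map_apply, Complex.ofReal_eq_zero] using this

lemma entry_re {α β : Type*} {M : Matrix α β ℂ} (h : reM M = 0) (i : α) (j : β) :
    (M i j).re = 0 := by
  have := congrFun (congrFun h i) j
  simpa [reM, Matrix.map_apply, Complex.ofReal_eq_zero] using this

lemma imM_add_zero {α β : Type*} {M N : Matrix α β ℂ} (h1 : imM M = 0) (h2 : imM N = 0) :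
    imM (M + N) = 0 := by
  ext i j
  simp [imM, Matrix.map_apply, Matrix.add_apply, entry_im h1, entry_im h2]

lemma imM_sub_zero {α β : Type*} {M N : Matrix α β ℂ} (h1 : imM M = 0) (h2 : imM N = 0) :
    imM (M - N) = 0 := by
  ext i j
  simp [imM, Matrix.map_apply, Matrix.sub_apply, entry_im h1, entry_im h2]

lemma reM_add_zero {α β : Type*} {M N : Matrix α β ℂ} (h1 : reM M = 0) (h2 : reM N = 0) :
    reM (M + N) = 0 := by
  ext i j
  simp [reM, Matrix.map_apply, Matrix.add_apply, entry_re h1, entry_re h2]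

lemma reM_sub_zero {α β : Type*} {M N : Matrix α β ℂ} (h1 : reM M = 0) (h2 : reM N = 0) :
    reM (M - N) = 0 := by
  ext i j
  simp [reM, Matrix.map_apply, Matrix.sub_apply, entry_re h1, entry_re h2]

lemma imM_conjT {m n : ℕ} {M : Matrix (Fin m) (Fin n) ℂ} (h : imM M = 0) :
    imM Mᴴ = 0 := by
  ext i j
  simp [imM, Matrix.map_apply, Matrix.conjTranspose_apply, entry_im h]

lemma reM_conjT {m n : ℕ} {M : Matrix (Fin m) (Fin n) ℂ} (h : reM M = 0) :
    reM Mᴴ = 0 := by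
  ext i j
  simp [reM, Matrix.map_apply, Matrix.conjTranspose_apply, entry_re h]

/-- The block-diagonal involution `diag(I, -I)`. -/
def TT (k : ℕ) : Matrix (Fin k ⊕ Fin k) (Fin k ⊕ Fin k) ℂ :=
  fromBlocks 1 0 0 (-1)

lemma TT_mul_TT (k : ℕ) : TT k * TT k = 1 := by
  simp [TT, fromBlocks_multiply, ← fromBlocks_one]

lemma TT_conj {k l : ℕ} (a : Matrix (Fin k) (Fin l) ℂ) (b : Matrix (Fin k) (Fin l) ℂ)
    (c : Matrix (Fin k) (Fin l) ℂ) (d : Matrix (Fin k) (Fin l) ℂ) :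
    TT k * fromBlocks a b c d * TT l = fromBlocks a (-b) (-c) d := by
  simp [TT, fromBlocks_multiply]

lemma TT_conjTranspose (k : ℕ) : (TT k)ᴴ = TT k := by
  simp [TT, fromBlocks_conjTranspose]

lemma conj2 {α β γ : Type*} [Fintype α] [Fintype β] [Fintype γ] [DecidableEq β]
    (Ta : Matrix α α ℂ) (Tb : Matrix β β ℂ) (Tc : Matrix γ γ ℂ)
    (X : Matrix α β ℂ) (Y : Matrix β γ ℂ) (hb : Tb * Tb = 1) :
    Ta * (X * Y) * Tc = (Ta * X * Tb) * (Tb * Y * Tc) := by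
  simp only [Matrix.mul_assoc]
  rw [← Matrix.mul_assoc Tb Tb, hb, Matrix.one_mul]

lemma conj3 {α β γ δ : Type*} [Fintype α] [Fintype β] [Fintype γ] [Fintype δ]
    [DecidableEq β] [DecidableEq γ]
    (Ta : Matrix α α ℂ) (Tb : Matrix β β ℂ) (Tc : Matrix γ γ ℂ) (Td : Matrix δ δ ℂ)
    (X : Matrix α β ℂ) (Y : Matrix β γ ℂ) (Z : Matrix γ δ ℂ)
    (hb : Tb * Tb = 1) (hc : Tc * Tc = 1) :
    Ta * (X * Y * Z) * Td = (Ta * X * Tb) * (Tb * Y * Tc) * (Tc * Z * Td) := by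
  simp only [Matrix.mul_assoc]
  rw [← Matrix.mul_assoc Tb Tb, hb, Matrix.one_mul, ← Matrix.mul_assoc Tc Tc, hc,
    Matrix.one_mul]

lemma inv_conj {α : Type*} [Fintype α] [DecidableEq α]
    (T M : Matrix α α ℂ) (hT : T * T = 1) (hM : T * M * T = M) (hs : IsUnit M) :
    T * M⁻¹ * T = M⁻¹ := by
  have hcomm : T * M = M * T := by
    calc T * M = (T * M * T) * T := by rw [mul_assoc, mul_assoc, hT, mul_one]
    _ = M * T := by rw [hM]
  have hd : IsUnit M.det := (Matrix.isUnit_iff_isUnit_det M).mp hs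
  refine (Matrix.inv_eq_left_inv ?_).symm
  calc T * M⁻¹ * T * M = T * M⁻¹ * (T * M) := by rw [mul_assoc]
  _ = T * M⁻¹ * (M * T) := by rw [hcomm]
  _ = T * (M⁻¹ * M) * T := by simp only [mul_assoc]
  _ = 1 := by rw [Matrix.nonsing_inv_mul M hd, mul_one, hT]

lemma TT_QJ (k : ℕ) : TT k * QJ k * TT k = -(QJ k) := by
  rw [QJ, TT_conj, Matrix.fromBlocks_neg]
  simp

/-- Key symmetry of `G` under conjugation by `TT`. -/
lemma G_conj {m n : ℕ} (Cm Cp : Matrix (Fin m) (Fin n) ℂ)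
    (Om Op : Matrix (Fin n) (Fin n) ℂ) (S : Matrix (Fin m) (Fin m) ℂ) (s : ℂ)
    (e : ℂ) (he : e * e = 1) (he' : star e = e)
    (hQD : TT m * QD S * TT m = QD S)
    (hQJH : TT n * QJH Om Op * TT n = QJH Om Op)
    (hTC : TT m * QC Cm Cp * TT n = e • QC Cm Cp)
    (hTB : TT n * QB Cm Cp S * TT m = e • QB Cm Cp S)
    (hs : IsUnit (s • (1 : Matrix (Fin n ⊕ Fin n) (Fin n ⊕ Fin n) ℂ) - QA Cm Cp Om Op)) :
    TT m * QG Cm Cp Om Op S s * TT m = QG Cm Cp Om Op S s := by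
  have hTCH : TT n * (QC Cm Cp)ᴴ * TT m = e • (QC Cm Cp)ᴴ := by
    have h := congrArg conjTranspose hTC
    simp only [Matrix.conjTranspose_mul, Matrix.conjTranspose_smul, TT_conjTranspose,
      he', Matrix.mul_assoc] at h
    simpa [Matrix.mul_assoc] using h
  have hTS : TT n * QCsharp Cm Cp * TT m = e • QCsharp Cm Cp := by
    simp only [QCsharp]
    rw [Matrix.mul_neg, Matrix.neg_mul,
      conj3 (TT n) (TT n) (TT m) (TT m) (QJ n) ((QC Cm Cp)ᴴ) (QJ m)
        (TT_mul_TT n) (TT_mul_TT m), TT_QJ n, TT_QJ m, hTCH]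
    simp [Matrix.neg_mul, Matrix.mul_neg, Matrix.smul_mul, Matrix.mul_smul]
  have hprod : TT n * (QCsharp Cm Cp * QC Cm Cp) * TT n = QCsharp Cm Cp * QC Cm Cp := by
    rw [conj2 (TT n) (TT m) (TT n) _ _ (TT_mul_TT m), hTS, hTC, Matrix.smul_mul,
      Matrix.mul_smul, smul_smul, he, one_smul]
  have hQA : TT n * QA Cm Cp Om Op * TT n = QA Cm Cp Om Op := by
    simp only [QA]
    rw [Matrix.mul_sub, Matrix.sub_mul, Matrix.mul_smul, Matrix.smul_mul, hprod, hQJH]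
  set M := s • (1 : Matrix (Fin n ⊕ Fin n) (Fin n ⊕ Fin n) ℂ) - QA Cm Cp Om Op with hMdef
  have hM : TT n * M * TT n = M := by
    rw [hMdef, Matrix.mul_sub, Matrix.sub_mul, Matrix.mul_smul, Matrix.smul_mul,
      Matrix.mul_one, TT_mul_TT, hQA]
  have hMinv : TT n * M⁻¹ * TT n = M⁻¹ := inv_conj _ _ (TT_mul_TT n) hM hs
  simp only [QG]
  rw [← hMdef, Matrix.mul_add, Matrix.add_mul, hQD,
    conj3 (TT m) (TT n) (TT n) (TT m) (QC Cm Cp) M⁻¹ (QB Cm Cp S)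
      (TT_mul_TT n) (TT_mul_TT n), hTC, hMinv, hTB]
  simp only [Matrix.smul_mul, Matrix.mul_smul, smul_smul, he, one_smul]

lemma blocks_zero {m : ℕ} (G : Matrix (Fin m ⊕ Fin m) (Fin m ⊕ Fin m) ℂ)
    (h : TT m * G * TT m = G) : G.toBlocks₁₂ = 0 ∧ G.toBlocks₂₁ = 0 := by
  have key : TT m * G * TT m
      = fromBlocks G.toBlocks₁₁ (-(G.toBlocks₁₂)) (-(G.toBlocks₂₁)) G.toBlocks₂₂ := by
    conv_lhs => rw [← Matrix.fromBlocks_toBlocks G]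
    rw [TT_conj]
  rw [key] at h
  constructor
  · have h12 := congrArg Matrix.toBlocks₁₂ h
    simp only [Matrix.toBlocks_fromBlocks₁₂] at h12
    have h2 : (2 : ℂ) • G.toBlocks₁₂ = 0 := by
      rw [two_smul]
      nth_rewrite 1 [← h12]
      exact neg_add_cancel _
    rcases smul_eq_zero.mp h2 with h0 | h0
    · exact absurd h0 two_ne_zero
    · exact h0
  · have h21 := congrArg Matrix.toBlocks₂₁ h
    simp only [Matrix.toBlocks_fromBlocks₂₁] at h21
    have h2 : (2 : ℂ) • G.toBlocks₂₁ = 0 := by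
      rw [two_smul]
      nth_rewrite 1 [← h21]
      exact neg_add_cancel _
    rcases smul_eq_zero.mp h2 with h0 | h0
    · exact absurd h0 two_ne_zero
    · exact h0

end BAEaux

open BAEaux

/-- S real, Ω₋, Ω₊ purely imaginary, C₋, C₊ both real or both purely imaginary ⟹ G_qp[s] = 0 and G_pq[s] = 0. -/
theorem stmt1 {m n : ℕ} (Cm Cp : Matrix (Fin m) (Fin n) ℂ)
    (Om Op : Matrix (Fin n) (Fin n) ℂ)
    (S : Matrix (Fin m) (Fin m) ℂ)
    (hOmHerm : Omᴴ = Om) (hOpSymm : Opᵀ = Op)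
    (hS : imM S = 0) (hOm : reM Om = 0) (hOp : reM Op = 0)
    (hC : (imM Cm = 0 ∧ imM Cp = 0) ∨ (reM Cm = 0 ∧ reM Cp = 0))
    (s : ℂ)
    (hs : IsUnit (s • (1 : Matrix (Fin n ⊕ Fin n) (Fin n ⊕ Fin n) ℂ) - QA Cm Cp Om Op)) :
    (QG Cm Cp Om Op S s).toBlocks₁₂ = 0 ∧ (QG Cm Cp Om Op S s).toBlocks₂₁ = 0 := by
  have hQD : TT m * QD S * TT m = QD S := by
    simp only [QD, hS, neg_zero, TT_conj]
  have hQJH : TT n * QJH Om Op * TT n = QJH Om Op := by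
    simp only [QJH, reM_add_zero hOm hOp, reM_sub_zero hOm hOp, neg_zero, TT_conj]
  apply blocks_zero
  rcases hC with ⟨hC1, hC2⟩ | ⟨hC1, hC2⟩
  · -- real case: e = 1
    have hTC : TT m * QC Cm Cp * TT n = (1 : ℂ) • QC Cm Cp := by
      rw [one_smul]
      simp only [QC, imM_add_zero hC1 hC2, imM_sub_zero hC1 hC2, neg_zero, TT_conj]
    have hTB : TT n * QB Cm Cp S * TT m = (1 : ℂ) • QB Cm Cp S := by
      rw [one_smul]
      have ha : imM (Cmᴴ - Cpᴴ) = 0 := imM_sub_zero (imM_conjT hC1) (imM_conjT hC2)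
      have hb : imM (Cmᴴ + Cpᴴ) = 0 := imM_add_zero (imM_conjT hC1) (imM_conjT hC2)
      have hF : TT n * fromBlocks (reM (Cmᴴ - Cpᴴ)) 0 0 (reM (Cmᴴ + Cpᴴ)) * TT m
          = fromBlocks (reM (Cmᴴ - Cpᴴ)) 0 0 (reM (Cmᴴ + Cpᴴ)) := by
        simp only [TT_conj, neg_zero]
      simp only [QB, ha, hb, neg_zero]
      rw [Matrix.mul_neg, Matrix.neg_mul,
        conj2 (TT n) (TT m) (TT m) _ _ (TT_mul_TT m), hF, hQD]
    exact G_conj Cm Cp Om Op S s 1 (one_mul 1) (by simp) hQD hQJH hTC hTB hs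
  · -- imaginary case: e = -1
    have hTC : TT m * QC Cm Cp * TT n = (-1 : ℂ) • QC Cm Cp := by
      rw [neg_one_smul]
      simp only [QC, reM_add_zero hC1 hC2, reM_sub_zero hC1 hC2, TT_conj,
        Matrix.fromBlocks_neg, neg_zero, neg_neg]
    have hTB : TT n * QB Cm Cp S * TT m = (-1 : ℂ) • QB Cm Cp S := by
      rw [neg_one_smul]
      have ha : reM (Cmᴴ - Cpᴴ) = 0 := reM_sub_zero (reM_conjT hC1) (reM_conjT hC2)
      have hb : reM (Cmᴴ + Cpᴴ) = 0 := reM_add_zero (reM_conjT hC1) (reM_conjT hC2)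
      have hF : TT n * fromBlocks 0 (-(imM (Cmᴴ - Cpᴴ))) (imM (Cmᴴ + Cpᴴ)) 0 * TT m
          = -(fromBlocks 0 (-(imM (Cmᴴ - Cpᴴ))) (imM (Cmᴴ + Cpᴴ)) 0) := by
        rw [TT_conj, Matrix.fromBlocks_neg]
        simp
      simp only [QB, ha, hb]
      rw [Matrix.mul_neg, Matrix.neg_mul,
        conj2 (TT n) (TT m) (TT m) _ _ (TT_mul_TT m), hF, hQD]
      simp [Matrix.neg_mul]
    exact G_conj Cm Cp Om Op S s (-1) (by ring) (by simp) hQD hQJH hTC hTB hs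
end
end

section
/- Suppose Ω_- and Ω_+ have the same real part (Re Ω_- = Re Ω_+), and both the scattering matrix S and the coupling matrices C_-, C_+ are real. Then for every s ∈ ℂ such that s·I_{2n} - A is invertible, the quadrature transfer function is block lower triangular: G_qp[s] = 0, i.e., a BAE measurement of q_out with respect to p_in is realized. -/
open Matrix Complex

noncomputable section

section Aux

variable {α β γ δ : Type*} [Fintype α] [Fintype β] [DecidableEq α] [DecidableEq β]

lemma inv_fromBlocks_zero12 (P : Matrix α α ℂ) (Q : Matrix β α ℂ) (R : Matrix β β ℂ)
    (h : IsUnit (fromBlocks P 0 Q R)) :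
    (fromBlocks P 0 Q R)⁻¹ = fromBlocks P⁻¹ 0 (-(R⁻¹ * Q * P⁻¹)) R⁻¹ := by
  have hdet : IsUnit (fromBlocks P 0 Q R).det := (Matrix.isUnit_iff_isUnit_det _).mp h
  rw [Matrix.det_fromBlocks_zero₁₂] at hdet
  have hP : IsUnit P.det := isUnit_of_mul_isUnit_left hdet
  have hR : IsUnit R.det := isUnit_of_mul_isUnit_right hdet
  apply Matrix.inv_eq_right_inv
  rw [Matrix.fromBlocks_multiply, Matrix.mul_nonsing_inv _ hP, Matrix.mul_nonsing_inv _ hR]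
  have : Q * P⁻¹ + R * -(R⁻¹ * Q * P⁻¹) = 0 := by
    rw [Matrix.mul_neg, ← Matrix.mul_assoc, ← Matrix.mul_assoc,
      Matrix.mul_nonsing_inv _ hR, Matrix.one_mul, add_neg_cancel]
  rw [this]
  simp [Matrix.fromBlocks_one]

end Aux

/-- Re Ω₋ = Re Ω₊, S, C₋, C₊ real ⟹ G_qp[s] = 0. -/
theorem stmt3 {m n : ℕ} (Cm Cp : Matrix (Fin m) (Fin n) ℂ)
    (Om Op : Matrix (Fin n) (Fin n) ℂ)
    (S : Matrix (Fin m) (Fin m) ℂ)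
    (hOmHerm : Omᴴ = Om) (hOpSymm : Opᵀ = Op)
    (hRe : reM Om = reM Op) (hS : imM S = 0) (hCm : imM Cm = 0) (hCp : imM Cp = 0)
    (s : ℂ)
    (hs : IsUnit (s • (1 : Matrix (Fin n ⊕ Fin n) (Fin n ⊕ Fin n) ℂ) - QA Cm Cp Om Op)) :
    (QG Cm Cp Om Op S s).toBlocks₁₂ = 0 := by
  -- entrywise real/imaginary facts
  have eCm : ∀ i j, (Cm i j).im = 0 := fun i j => by
    have := congrFun (congrFun hCm i) j
    simpa [imM, Complex.ofReal_eq_zero] using this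
  have eCp : ∀ i j, (Cp i j).im = 0 := fun i j => by
    have := congrFun (congrFun hCp i) j
    simpa [imM, Complex.ofReal_eq_zero] using this
  have eS : ∀ i j, (S i j).im = 0 := fun i j => by
    have := congrFun (congrFun hS i) j
    simpa [imM, Complex.ofReal_eq_zero] using this
  have h1 : imM (Cm + Cp) = 0 := by
    ext i j; simp [imM, Matrix.add_apply, eCm, eCp]
  have h2 : imM (Cm - Cp) = 0 := by
    ext i j; simp [imM, Matrix.sub_apply, eCm, eCp]
  have h3 : imM (Cmᴴ - Cpᴴ) = 0 := by
    ext i j; simp [imM, Matrix.sub_apply, Matrix.conjTranspose_apply, eCm, eCp]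
  have h3' : imM (Cmᴴ + Cpᴴ) = 0 := by
    ext i j; simp [imM, Matrix.add_apply, Matrix.conjTranspose_apply, eCm, eCp]
  have h4 : reM (Om - Op) = 0 := by
    ext i j
    have := congrFun (congrFun hRe i) j
    simp only [reM, Matrix.map_apply] at this
    simp [reM, Matrix.sub_apply, Complex.sub_re, Matrix.zero_apply,
      sub_eq_zero]
    exact_mod_cast this
  -- block forms
  set X := reM (Cm + Cp) with hX
  set Y := reM (Cm - Cp) with hY
  have hQC : QC Cm Cp = fromBlocks X 0 0 Y := by
    rw [QC, h1, h2]; simp; exact ⟨rfl, rfl⟩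
  have hQD : QD S = fromBlocks (reM S) 0 0 (reM S) := by
    rw [QD, hS]; simp
  have hQB : QB Cm Cp S = fromBlocks (-(reM (Cmᴴ - Cpᴴ) * reM S)) 0 0
      (-(reM (Cmᴴ + Cpᴴ) * reM S)) := by
    rw [QB, h3, h3', hQD]
    simp [Matrix.fromBlocks_multiply, Matrix.fromBlocks_neg]
  have hQCs : QCsharp Cm Cp = fromBlocks Yᴴ 0 0 Xᴴ := by
    simp [QCsharp, hQC, QJ, Matrix.fromBlocks_conjTranspose, Matrix.fromBlocks_multiply,
      Matrix.fromBlocks_neg]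
  have hQA : QA Cm Cp Om Op = fromBlocks
      (imM (Om + Op) - (1/2 : ℂ) • (Yᴴ * X)) 0
      (-(reM (Om + Op))) (imM (Om - Op) - (1/2 : ℂ) • (Xᴴ * Y)) := by
    rw [QA, QJH, h4, hQCs, hQC, sub_eq_add_neg]
    simp [Matrix.fromBlocks_multiply, Matrix.fromBlocks_smul, Matrix.fromBlocks_neg,
      Matrix.fromBlocks_add, sub_eq_add_neg]
  set P := s • (1 : Matrix (Fin n) (Fin n) ℂ) - (imM (Om + Op) - (1/2 : ℂ) • (Yᴴ * X)) with hP
  set Q := -(-(reM (Om + Op))) with hQ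
  set R := s • (1 : Matrix (Fin n) (Fin n) ℂ) - (imM (Om - Op) - (1/2 : ℂ) • (Xᴴ * Y)) with hR
  have hsum : s • (1 : Matrix (Fin n ⊕ Fin n) (Fin n ⊕ Fin n) ℂ) - QA Cm Cp Om Op
      = fromBlocks P 0 Q R := by
    rw [hQA, ← Matrix.fromBlocks_one, Matrix.fromBlocks_smul, sub_eq_add_neg,
      Matrix.fromBlocks_neg, Matrix.fromBlocks_add]
    simp [hP, hQ, hR, sub_eq_add_neg]
  rw [hsum] at hs
  have hinv := inv_fromBlocks_zero12 P Q R hs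
  rw [QG, hQD, hQC, hQB, hsum, hinv]
  simp [Matrix.fromBlocks_multiply, Matrix.fromBlocks_add, Matrix.toBlocks₁₂]
  rfl
end
end

section
/- Suppose Ω_- and Ω_+ have the same real part (Re Ω_- = Re Ω_+), the scattering matrix S is real, and the coupling matrices C_-, C_+ are purely imaginary. Then for every s ∈ ℂ such that s·I_{2n} - A is invertible, the quadrature transfer function is block upper triangular: G_pq[s] = 0, i.e., a BAE measurement of p_out with respect to q_in is realized. -/
open Matrix Complex

noncomputable section

lemma inv_toBlocks₁₂_zero {l o : Type*} [Fintype l] [Fintype o] [DecidableEq l] [DecidableEq o]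
    (M : Matrix (l ⊕ o) (l ⊕ o) ℂ) (h12 : M.toBlocks₁₂ = 0) (h : IsUnit M) :
    M⁻¹.toBlocks₁₂ = 0 := by
  set A := M.toBlocks₁₁ with hA
  set C := M.toBlocks₂₁ with hCdef
  set D := M.toBlocks₂₂ with hDdef
  have hM : M = fromBlocks A 0 C D := by
    rw [← fromBlocks_toBlocks M, h12]
  have hdet : IsUnit M.det := (Matrix.isUnit_iff_isUnit_det M).mp h
  rw [hM, Matrix.det_fromBlocks_zero₁₂] at hdet
  have hAU : IsUnit A.det := isUnit_of_mul_isUnit_left hdet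
  have hDU : IsUnit D.det := isUnit_of_mul_isUnit_right hdet
  have key : C * A⁻¹ + D * -(D⁻¹ * C * A⁻¹) = 0 := by
    rw [Matrix.mul_neg, ← Matrix.mul_assoc, ← Matrix.mul_assoc,
      Matrix.mul_nonsing_inv _ hDU, Matrix.one_mul]
    exact add_neg_cancel _
  have hinv : M⁻¹ = fromBlocks A⁻¹ 0 (-(D⁻¹ * C * A⁻¹)) D⁻¹ := by
    apply Matrix.inv_eq_right_inv
    rw [hM, fromBlocks_multiply, Matrix.mul_nonsing_inv _ hAU, Matrix.mul_nonsing_inv _ hDU, key]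
    simp [fromBlocks_one]
  rw [hinv, toBlocks_fromBlocks₁₂]

/-- Re Ω₋ = Re Ω₊, S real, C₋, C₊ purely imaginary ⟹ G_pq[s] = 0. -/
theorem stmt4 {m n : ℕ} (Cm Cp : Matrix (Fin m) (Fin n) ℂ)
    (Om Op : Matrix (Fin n) (Fin n) ℂ)
    (S : Matrix (Fin m) (Fin m) ℂ)
    (hOmHerm : Omᴴ = Om) (hOpSymm : Opᵀ = Op)
    (hRe : reM Om = reM Op) (hS : imM S = 0) (hCm : reM Cm = 0) (hCp : reM Cp = 0)
    (s : ℂ)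
    (hs : IsUnit (s • (1 : Matrix (Fin n ⊕ Fin n) (Fin n ⊕ Fin n) ℂ) - QA Cm Cp Om Op)) :
    (QG Cm Cp Om Op S s).toBlocks₂₁ = 0 := by
  have hCm' : ∀ i j, (Cm i j).re = 0 := fun i j => by
    simpa [reM] using congrFun (congrFun hCm i) j
  have hCp' : ∀ i j, (Cp i j).re = 0 := fun i j => by
    simpa [reM] using congrFun (congrFun hCp i) j
  have hS' : ∀ i j, (S i j).im = 0 := fun i j => by
    simpa [imM] using congrFun (congrFun hS i) j
  have hRe' : ∀ i j, (Om i j).re = (Op i j).re := fun i j => by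
    have := congrFun (congrFun hRe i) j
    simpa [reM] using this
  have hre1 : reM (Cm + Cp) = 0 := by ext i j; simp [reM, Complex.add_re, hCm', hCp']
  have hre2 : reM (Cm - Cp) = 0 := by ext i j; simp [reM, Complex.sub_re, hCm', hCp']
  have hre3 : reM (Cmᴴ - Cpᴴ) = 0 := by
    ext i j; simp [reM, Matrix.conjTranspose_apply, Complex.sub_re, hCm', hCp']
  have hre4 : reM (Cmᴴ + Cpᴴ) = 0 := by
    ext i j; simp [reM, Matrix.conjTranspose_apply, Complex.add_re, hCm', hCp']
  have hre5 : reM (Om - Op) = 0 := by ext i j; simp [reM, Complex.sub_re, hRe']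
  set R := reM S with hR
  set P := -(imM (Cm - Cp)) with hP
  set Q := imM (Cm + Cp) with hQ
  have hD : QD S = fromBlocks R 0 0 R := by rw [QD, hS]; simp [hR]
  have hC : QC Cm Cp = fromBlocks 0 P Q 0 := by rw [QC, hre1, hre2]
  have hB : QB Cm Cp S =
      fromBlocks 0 (imM (Cmᴴ - Cpᴴ) * R) (-(imM (Cmᴴ + Cpᴴ) * R)) 0 := by
    rw [QB, hre3, hre4, hD]
    simp [fromBlocks_multiply, fromBlocks_neg, Matrix.neg_mul]
  have hCs : QCsharp Cm Cp * QC Cm Cp = fromBlocks (-(Pᴴ * Q)) 0 0 (-(Qᴴ * P)) := by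
    simp only [QCsharp, QJ]
    rw [hC, fromBlocks_conjTranspose]
    simp [fromBlocks_multiply, fromBlocks_neg, Matrix.neg_mul, Matrix.mul_neg]
  set M := s • (1 : Matrix (Fin n ⊕ Fin n) (Fin n ⊕ Fin n) ℂ) - QA Cm Cp Om Op with hMdef
  have hM12 : M.toBlocks₁₂ = 0 := by
    rw [hMdef, QA, QJH, hre5, hCs]
    ext i j
    simp [Matrix.toBlocks₁₂, Matrix.fromBlocks, Matrix.one_apply]
  have hN12 : M⁻¹.toBlocks₁₂ = 0 := inv_toBlocks₁₂_zero M hM12 hs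
  have hNfrom : M⁻¹ = fromBlocks M⁻¹.toBlocks₁₁ 0 M⁻¹.toBlocks₂₁ M⁻¹.toBlocks₂₂ := by
    conv_lhs => rw [← fromBlocks_toBlocks M⁻¹]
    rw [hN12]
  have hG : QG Cm Cp Om Op S s = QD S + QC Cm Cp * M⁻¹ * QB Cm Cp S := rfl
  rw [hG, hD, hC, hB, hNfrom]
  simp [fromBlocks_multiply, Matrix.fromBlocks_add, Matrix.toBlocks_fromBlocks₂₁]
end
end

section
/- Suppose Ω_- and Ω_+ have the same real part (Re Ω_- = Re Ω_+), and both the scattering matrix S and the coupling matrices C_-, C_+ are purely imaginary. Then for every s ∈ ℂ such that s·I_{2n} - A is invertible, the bottom-right block of the quadrature transfer function vanishes: G_pp[s] = 0, i.e., a BAE measurement of p_out with respect to p_in is realized. -/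
open Matrix Complex

noncomputable section

section helpers
variable {α : Type*} [CommRing α]
variable {l m n o p q : Type*}

lemma toBlocks₁₁_mul [Fintype l] [Fintype m]
    (M : Matrix (n ⊕ o) (l ⊕ m) α) (N : Matrix (l ⊕ m) (p ⊕ q) α) :
    (M * N).toBlocks₁₁ = M.toBlocks₁₁ * N.toBlocks₁₁ + M.toBlocks₁₂ * N.toBlocks₂₁ := by
  conv_lhs => rw [← fromBlocks_toBlocks M, ← fromBlocks_toBlocks N, fromBlocks_multiply]
  exact toBlocks_fromBlocks₁₁ _ _ _ _

lemma toBlocks₁₂_mul [Fintype l] [Fintype m]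
    (M : Matrix (n ⊕ o) (l ⊕ m) α) (N : Matrix (l ⊕ m) (p ⊕ q) α) :
    (M * N).toBlocks₁₂ = M.toBlocks₁₁ * N.toBlocks₁₂ + M.toBlocks₁₂ * N.toBlocks₂₂ := by
  conv_lhs => rw [← fromBlocks_toBlocks M, ← fromBlocks_toBlocks N, fromBlocks_multiply]
  exact toBlocks_fromBlocks₁₂ _ _ _ _

lemma toBlocks₂₂_mul [Fintype l] [Fintype m]
    (M : Matrix (n ⊕ o) (l ⊕ m) α) (N : Matrix (l ⊕ m) (p ⊕ q) α) :
    (M * N).toBlocks₂₂ = M.toBlocks₂₁ * N.toBlocks₁₂ + M.toBlocks₂₂ * N.toBlocks₂₂ := by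
  conv_lhs => rw [← fromBlocks_toBlocks M, ← fromBlocks_toBlocks N, fromBlocks_multiply]
  exact toBlocks_fromBlocks₂₂ _ _ _ _

lemma toBlocks₂₂_add (M N : Matrix (n ⊕ o) (l ⊕ m) α) :
    (M + N).toBlocks₂₂ = M.toBlocks₂₂ + N.toBlocks₂₂ := rfl

lemma toBlocks₁₂_sub (M N : Matrix (n ⊕ o) (l ⊕ m) α) :
    (M - N).toBlocks₁₂ = M.toBlocks₁₂ - N.toBlocks₁₂ := rfl

lemma toBlocks₁₂_neg (M : Matrix (n ⊕ o) (l ⊕ m) α) :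
    (-M).toBlocks₁₂ = -M.toBlocks₁₂ := rfl

lemma toBlocks₁₁_neg (M : Matrix (n ⊕ o) (l ⊕ m) α) :
    (-M).toBlocks₁₁ = -M.toBlocks₁₁ := rfl

lemma toBlocks₁₂_smul (c : α) (M : Matrix (n ⊕ o) (l ⊕ m) α) :
    (c • M).toBlocks₁₂ = c • M.toBlocks₁₂ := rfl

lemma toBlocks₁₂_one [DecidableEq l] [DecidableEq m] :
    (1 : Matrix (l ⊕ m) (l ⊕ m) α).toBlocks₁₂ = 0 := by
  rw [← fromBlocks_one]; exact toBlocks_fromBlocks₁₂ _ _ _ _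

lemma toBlocks₂₂_conjTranspose (M : Matrix (n ⊕ o) (l ⊕ m) ℂ) :
    (Mᴴ).toBlocks₂₂ = (M.toBlocks₂₂)ᴴ := by
  conv_lhs => rw [← fromBlocks_toBlocks M, fromBlocks_conjTranspose]
  exact toBlocks_fromBlocks₂₂ _ _ _ _

lemma inv_toBlocks₁₂_of_block_triangular {l m : Type*} [Fintype l] [Fintype m]
    [DecidableEq l] [DecidableEq m]
    (M : Matrix (l ⊕ m) (l ⊕ m) ℂ) (h12 : M.toBlocks₁₂ = 0) :
    M⁻¹.toBlocks₁₂ = 0 := by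
  have hM : M = fromBlocks M.toBlocks₁₁ 0 M.toBlocks₂₁ M.toBlocks₂₂ := by
    rw [← h12, fromBlocks_toBlocks]
  by_cases hu : IsUnit M
  · rw [hM] at hu ⊢
    obtain ⟨hA, hD⟩ := isUnit_fromBlocks_zero₁₂.mp hu
    rw [inv_fromBlocks_zero₁₂_of_isUnit_iff _ _ _ (by simp [hA, hD])]
    exact toBlocks_fromBlocks₁₂ _ _ _ _
  · rw [nonsing_inv_eq_ringInverse, Ring.inverse_non_unit _ hu]; rfl

lemma reM_sub_s6 {M N : Matrix n l ℂ} : reM (M - N) = reM M - reM N := by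
  ext i j; simp [reM]

lemma reM_conjTranspose {M : Matrix n l ℂ} : reM (Mᴴ) = (reM M)ᵀ := by
  ext i j; simp [reM]

end helpers

/-- Re Ω₋ = Re Ω₊, S, C₋, C₊ purely imaginary ⟹ G_pp[s] = 0. -/
theorem stmt6 {m n : ℕ} (Cm Cp : Matrix (Fin m) (Fin n) ℂ)
    (Om Op : Matrix (Fin n) (Fin n) ℂ)
    (S : Matrix (Fin m) (Fin m) ℂ)
    (hOmHerm : Omᴴ = Om) (hOpSymm : Opᵀ = Op)
    (hRe : reM Om = reM Op) (hS : reM S = 0) (hCm : reM Cm = 0) (hCp : reM Cp = 0)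
    (s : ℂ)
    (hs : IsUnit (s • (1 : Matrix (Fin n ⊕ Fin n) (Fin n ⊕ Fin n) ℂ) - QA Cm Cp Om Op)) :
    (QG Cm Cp Om Op S s).toBlocks₂₂ = 0 := by
  have hC22 : (QC Cm Cp).toBlocks₂₂ = 0 := by
    rw [QC, toBlocks_fromBlocks₂₂, reM_sub_s6, hCm, hCp, sub_zero]
  have hB12 : (QB Cm Cp S).toBlocks₁₂ = 0 := by
    rw [QB, toBlocks₁₂_neg, toBlocks₁₂_mul, toBlocks_fromBlocks₁₁, toBlocks_fromBlocks₁₂,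
      QD, toBlocks_fromBlocks₂₂, reM_sub_s6, reM_conjTranspose, reM_conjTranspose, hCm, hCp, hS]
    simp
  have hCsh11 : (QCsharp Cm Cp).toBlocks₁₁ = 0 := by
    rw [QCsharp, toBlocks₁₁_neg, toBlocks₁₁_mul, toBlocks₁₁_mul, toBlocks₁₂_mul,
      toBlocks₂₂_conjTranspose, hC22]
    simp [QJ]
  have hM12 : (s • (1 : Matrix (Fin n ⊕ Fin n) (Fin n ⊕ Fin n) ℂ)
      - QA Cm Cp Om Op).toBlocks₁₂ = 0 := by
    rw [toBlocks₁₂_sub, toBlocks₁₂_smul, toBlocks₁₂_one, QA, toBlocks₁₂_sub, toBlocks₁₂_smul,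
      toBlocks₁₂_mul, hCsh11, hC22, QJH, toBlocks_fromBlocks₁₂, reM_sub_s6, hRe]
    simp
  have hX12 := inv_toBlocks₁₂_of_block_triangular _ hM12
  rw [QG, toBlocks₂₂_add, toBlocks₂₂_mul, toBlocks₂₂_mul, hX12, hC22, hB12,
    QD, toBlocks_fromBlocks₂₂, hS]
  simp
end
end

section
/- Suppose Ω_- and Ω_+ have opposite real parts (Re Ω_- = -Re Ω_+), and both the scattering matrix S and the coupling matrices C_-, C_+ are real. Then for every s ∈ ℂ such that s·I_{2n} - A is invertible, the quadrature transfer function is block upper triangular: G_pq[s] = 0, i.e., a BAE measurement of p_out with respect to q_in is realized. -/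
open Matrix Complex

noncomputable section

section Helpers

lemma toBlocks₂₁_neg {a b c d : Type*} (M : Matrix (a ⊕ b) (c ⊕ d) ℂ) :
    (-M).toBlocks₂₁ = -M.toBlocks₂₁ := rfl

lemma toBlocks₂₁_add {a b c d : Type*} (M N : Matrix (a ⊕ b) (c ⊕ d) ℂ) :
    (M + N).toBlocks₂₁ = M.toBlocks₂₁ + N.toBlocks₂₁ := rfl

lemma toBlocks₂₁_sub {a b c d : Type*} (M N : Matrix (a ⊕ b) (c ⊕ d) ℂ) :
    (M - N).toBlocks₂₁ = M.toBlocks₂₁ - N.toBlocks₂₁ := rfl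

lemma toBlocks₂₁_smul {a b c d : Type*} (r : ℂ) (M : Matrix (a ⊕ b) (c ⊕ d) ℂ) :
    (r • M).toBlocks₂₁ = r • M.toBlocks₂₁ := rfl

lemma toBlocks₂₁_one {a b : Type*} [DecidableEq a] [DecidableEq b] :
    (1 : Matrix (a ⊕ b) (a ⊕ b) ℂ).toBlocks₂₁ = 0 := by
  rw [← fromBlocks_one, toBlocks_fromBlocks₂₁]

lemma toBlocks₂₁_mul {a b c d e f : Type*} [Fintype c] [Fintype d]
    (M : Matrix (a ⊕ b) (c ⊕ d) ℂ) (N : Matrix (c ⊕ d) (e ⊕ f) ℂ)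
    (hM : M.toBlocks₂₁ = 0) (hN : N.toBlocks₂₁ = 0) :
    (M * N).toBlocks₂₁ = 0 := by
  rw [← fromBlocks_toBlocks M, ← fromBlocks_toBlocks N, hM, hN, fromBlocks_multiply]
  simp [toBlocks_fromBlocks₂₁]

lemma toBlocks₂₁_inv {a b : Type*} [Fintype a] [Fintype b] [DecidableEq a] [DecidableEq b]
    (M : Matrix (a ⊕ b) (a ⊕ b) ℂ) (hM : M.toBlocks₂₁ = 0) (h : IsUnit M) :
    M⁻¹.toBlocks₂₁ = 0 := by
  rw [← fromBlocks_toBlocks M, hM] at h ⊢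
  have hInv : Invertible (fromBlocks M.toBlocks₁₁ M.toBlocks₁₂ 0 M.toBlocks₂₂) := h.invertible
  obtain ⟨hA, hD⟩ := Matrix.invertibleOfFromBlocksZero₂₁Invertible
    M.toBlocks₁₁ M.toBlocks₁₂ M.toBlocks₂₂
  rw [← Matrix.invOf_eq_nonsing_inv, Matrix.invOf_fromBlocks_zero₂₁_eq,
    toBlocks_fromBlocks₂₁]

lemma imM_entry_zero {α β : Type*} {M : Matrix α β ℂ} (h : imM M = 0) (i : α) (j : β) :
    (M i j).im = 0 := by
  have := congrFun (congrFun h i) j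
  simpa [imM, Matrix.map_apply] using this

lemma imM_add_zero {α β : Type*} {M N : Matrix α β ℂ} (hM : imM M = 0) (hN : imM N = 0) :
    imM (M + N) = 0 := by
  ext i j
  simp [imM, Matrix.map_apply, Matrix.add_apply, imM_entry_zero hM, imM_entry_zero hN]

lemma imM_sub_zero {α β : Type*} {M N : Matrix α β ℂ} (hM : imM M = 0) (hN : imM N = 0) :
    imM (M - N) = 0 := by
  ext i j
  simp [imM, Matrix.map_apply, Matrix.sub_apply, imM_entry_zero hM, imM_entry_zero hN]

lemma imM_conjTranspose_zero {α β : Type*} {M : Matrix α β ℂ} (hM : imM M = 0) :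
    imM Mᴴ = 0 := by
  ext i j
  simp [imM, Matrix.map_apply, Matrix.conjTranspose_apply, imM_entry_zero hM]

end Helpers

/-- Re Ω₋ = -Re Ω₊, S, C₋, C₊ real ⟹ G_pq[s] = 0. -/
theorem stmt7 {m n : ℕ} (Cm Cp : Matrix (Fin m) (Fin n) ℂ)
    (Om Op : Matrix (Fin n) (Fin n) ℂ)
    (S : Matrix (Fin m) (Fin m) ℂ)
    (hOmHerm : Omᴴ = Om) (hOpSymm : Opᵀ = Op)
    (hRe : reM Om = -(reM Op)) (hS : imM S = 0) (hCm : imM Cm = 0) (hCp : imM Cp = 0)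
    (s : ℂ)
    (hs : IsUnit (s • (1 : Matrix (Fin n ⊕ Fin n) (Fin n ⊕ Fin n) ℂ) - QA Cm Cp Om Op)) :
    (QG Cm Cp Om Op S s).toBlocks₂₁ = 0 := by
  -- basic zero facts
  have hCsum : imM (Cm + Cp) = 0 := imM_add_zero hCm hCp
  have hCdiff : imM (Cm - Cp) = 0 := imM_sub_zero hCm hCp
  have hCmH : imM Cmᴴ = 0 := imM_conjTranspose_zero hCm
  have hCpH : imM Cpᴴ = 0 := imM_conjTranspose_zero hCp
  -- QC is block diagonal
  have hQC : QC Cm Cp = fromBlocks (reM (Cm + Cp)) 0 0 (reM (Cm - Cp)) := by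
    unfold QC
    rw [hCsum, hCdiff, neg_zero]
  -- QD block 21 is zero
  have hQD21 : (QD S).toBlocks₂₁ = 0 := by
    unfold QD
    rw [toBlocks_fromBlocks₂₁, hS]
  -- QB block 21 is zero
  have hQB21 : (QB Cm Cp S).toBlocks₂₁ = 0 := by
    unfold QB
    rw [toBlocks₂₁_neg, toBlocks₂₁_mul _ _ ?_ hQD21, neg_zero]
    rw [toBlocks_fromBlocks₂₁, imM_add_zero hCmH hCpH]
  -- QCsharp is block diagonal (in particular its 21 block vanishes)
  have hQCs21 : (QCsharp Cm Cp).toBlocks₂₁ = 0 := by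
    unfold QCsharp QJ
    rw [hQC, fromBlocks_conjTranspose, fromBlocks_multiply, fromBlocks_multiply]
    rw [toBlocks₂₁_neg, toBlocks_fromBlocks₂₁]
    simp
  -- QJH block 21 is zero, using Re Ω₋ = -Re Ω₊
  have hQJH21 : (QJH Om Op).toBlocks₂₁ = 0 := by
    unfold QJH
    rw [toBlocks_fromBlocks₂₁]
    have : reM (Om + Op) = 0 := by
      ext i j
      have h1 := congrFun (congrFun hRe i) j
      simp only [reM, Matrix.map_apply, Matrix.neg_apply] at h1
      simp [reM, Matrix.map_apply, Matrix.add_apply, Complex.add_re]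
      have : ((Om i j).re : ℂ) + ((Op i j).re : ℂ) = 0 := by rw [h1]; ring
      exact_mod_cast this
    rw [this, neg_zero]
  -- QA block 21 is zero
  have hQA21 : (QA Cm Cp Om Op).toBlocks₂₁ = 0 := by
    unfold QA
    rw [toBlocks₂₁_sub, hQJH21, toBlocks₂₁_smul,
      toBlocks₂₁_mul _ _ hQCs21 (by rw [hQC, toBlocks_fromBlocks₂₁])]
    simp
  -- sI - A block 21 is zero
  have hsA21 : (s • (1 : Matrix (Fin n ⊕ Fin n) (Fin n ⊕ Fin n) ℂ)
      - QA Cm Cp Om Op).toBlocks₂₁ = 0 := by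
    rw [toBlocks₂₁_sub, hQA21, toBlocks₂₁_smul, toBlocks₂₁_one]
    simp
  -- inverse block 21 is zero
  have hinv21 : ((s • (1 : Matrix (Fin n ⊕ Fin n) (Fin n ⊕ Fin n) ℂ)
      - QA Cm Cp Om Op)⁻¹).toBlocks₂₁ = 0 := toBlocks₂₁_inv _ hsA21 hs
  -- conclude
  unfold QG
  rw [toBlocks₂₁_add, hQD21,
    toBlocks₂₁_mul _ _ (toBlocks₂₁_mul _ _ (by rw [hQC, toBlocks_fromBlocks₂₁]) hinv21) hQB21]
  simp
end
end

section
/- Suppose the scattering matrix S is real, the coupling matrices C_- and C_+ are purely imaginary, and C_- = C_+ (position coupling). Then, with no further assumption on the Hamiltonian matrices Ω_-, Ω_+ (beyond Ω_- Hermitian and Ω_+ symmetric), for every s ∈ ℂ such that s·I_{2n} - A is invertible one has G_qp[s] = 0; i.e., a BAE measurement of q_out with respect to p_in is realized. -/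
open Matrix Complex

noncomputable section

/-- S real, C₋, C₊ purely imaginary with C₋ = C₊ (position coupling), no condition on Ω ⟹ G_qp[s] = 0. -/
theorem stmt11 {m n : ℕ} (Cm Cp : Matrix (Fin m) (Fin n) ℂ)
    (Om Op : Matrix (Fin n) (Fin n) ℂ)
    (S : Matrix (Fin m) (Fin m) ℂ)
    (hOmHerm : Omᴴ = Om) (hOpSymm : Opᵀ = Op)
    (hS : imM S = 0) (hCm : reM Cm = 0) (hCp : reM Cp = 0) (hCoupl : Cm = Cp)
    (s : ℂ)
    (hs : IsUnit (s • (1 : Matrix (Fin n ⊕ Fin n) (Fin n ⊕ Fin n) ℂ) - QA Cm Cp Om Op)) :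
    (QG Cm Cp Om Op S s).toBlocks₁₂ = 0 := by
  have hrow : ∀ (i : Fin m) (l : Fin n ⊕ Fin n), QC Cm Cp (Sum.inl i) l = 0 := by
    intro i l
    cases l with
    | inl a =>
      have e1 : (Cm i a).re = 0 := by
        have := congrFun (congrFun hCm i) a
        simpa [reM, Matrix.map_apply, Complex.ofReal_eq_zero] using this
      have e2 : (Cp i a).re = 0 := by
        have := congrFun (congrFun hCp i) a
        simpa [reM, Matrix.map_apply, Complex.ofReal_eq_zero] using this
      simp [QC, Matrix.fromBlocks, reM, Matrix.map_apply, e1, e2]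
    | inr a =>
      simp [QC, Matrix.fromBlocks, imM, Matrix.map_apply, hCoupl, sub_self]
  funext i j
  have hQD : QD S (Sum.inl i) (Sum.inr j) = 0 := by
    have := congrFun (congrFun hS i) j
    simp only [imM, Matrix.map_apply, Matrix.zero_apply, Complex.ofReal_eq_zero] at this
    simp [QD, Matrix.fromBlocks, imM, this]
  have hprod : (QC Cm Cp *
      (s • (1 : Matrix (Fin n ⊕ Fin n) (Fin n ⊕ Fin n) ℂ) - QA Cm Cp Om Op)⁻¹ *
      QB Cm Cp S) (Sum.inl i) (Sum.inr j) = 0 := by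
    rw [Matrix.mul_apply]
    apply Finset.sum_eq_zero
    intro k _
    rw [Matrix.mul_apply]
    simp [hrow]
  simp [Matrix.toBlocks₁₂, QG, Matrix.add_apply, hQD, hprod]
end
end

section
/- Suppose the scattering matrix S is real, the coupling matrices C_- and C_+ are purely imaginary, and C_- = -C_+ (momentum coupling). Then, with no further assumption on the Hamiltonian matrices Ω_-, Ω_+ (beyond Ω_- Hermitian and Ω_+ symmetric), for every s ∈ ℂ such that s·I_{2n} - A is invertible one has G_pq[s] = 0; i.e., a BAE measurement of p_out with respect to q_in is realized. -/
open Matrix Complex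

noncomputable section

/-- S real, C₋, C₊ purely imaginary with C₋ = -C₊ (momentum coupling), no condition on Ω ⟹ G_pq[s] = 0. -/
theorem stmt12 {m n : ℕ} (Cm Cp : Matrix (Fin m) (Fin n) ℂ)
    (Om Op : Matrix (Fin n) (Fin n) ℂ)
    (S : Matrix (Fin m) (Fin m) ℂ)
    (hOmHerm : Omᴴ = Om) (hOpSymm : Opᵀ = Op)
    (hS : imM S = 0) (hCm : reM Cm = 0) (hCp : reM Cp = 0) (hCoupl : Cm = -Cp)
    (s : ℂ)
    (hs : IsUnit (s • (1 : Matrix (Fin n ⊕ Fin n) (Fin n ⊕ Fin n) ℂ) - QA Cm Cp Om Op)) :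
    (QG Cm Cp Om Op S s).toBlocks₂₁ = 0 := by
  have hsum : Cm + Cp = 0 := by rw [hCoupl]; exact neg_add_cancel Cp
  have hQCrow : ∀ (i : Fin m) (k : Fin n ⊕ Fin n), QC Cm Cp (Sum.inr i) k = 0 := by
    intro i k
    cases k with
    | inl k =>
      simp only [QC, fromBlocks_apply₂₁, hsum, imM, Matrix.map_apply, Matrix.zero_apply]
      simp
    | inr k =>
      have h1 : (Cm i k).re = 0 := by
        have := congrFun (congrFun hCm i) k
        simpa [reM] using this
      have h2 : (Cp i k).re = 0 := by
        have := congrFun (congrFun hCp i) k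
        simpa [reM] using this
      simp [QC, fromBlocks_apply₂₂, reM, Matrix.map_apply, Complex.sub_re, h1, h2]
  ext i j
  simp only [QG, Matrix.toBlocks₂₁, Matrix.zero_apply, Matrix.submatrix_apply,
    Matrix.add_apply]
  have hD : QD S (Sum.inr i) (Sum.inl j) = 0 := by
    simp [QD, fromBlocks_apply₂₁, hS]
  rw [Matrix.of_apply, hD, Matrix.mul_assoc, Matrix.mul_apply, zero_add]
  apply Finset.sum_eq_zero
  intro k _
  rw [hQCrow i k, zero_mul]
end
end

section
/- Let Ω_- ∈ ℂ^{n×n} be Hermitian, Ω_+ ∈ ℂ^{n×n} be symmetric (Ω_+⊤ = Ω_+), and C_-, C_+ ∈ ℂ^{m×n}. Then the two equations C_-·Ω_- = C_+·Ω_+† and C_-·Ω_+ = C_+·Ω_-⊤ hold simultaneously if and only if Δ(C_-, C_+)·Δ(Ω_-, Ω_+) = 2·Δ(C_-, 0)·Δ(Ω_-, Ω_+). (This pair of matrix equations characterizes the quantum non-demolition interaction condition [L, H] = 0 for the coupling operator L = C_-·a + C_+·a^# and Hamiltonian H = (1/2)·ă†·Δ(Ω_-,Ω_+)·ă of a linear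 quantum system.) -/
open Matrix Complex

noncomputable section

/-- The doubled-up matrix `Δ(U, V) = [[U, V],[V^#, U^#]]`. -/
def DeltaM {k r : ℕ} (U V : Matrix (Fin k) (Fin r) ℂ) :
    Matrix (Fin k ⊕ Fin k) (Fin r ⊕ Fin r) ℂ :=
  fromBlocks U V (V.map (starRingEnd ℂ)) (U.map (starRingEnd ℂ))

/-- `J_k = diag(I_k, -I_k)`. -/
def Jdg (k : ℕ) : Matrix (Fin k ⊕ Fin k) (Fin k ⊕ Fin k) ℂ :=
  fromBlocks 1 0 0 (-1)

/-- `𝒞♭ = Jₙ · 𝒞† · Jₘ` for `𝒞 = Δ(C₋, C₊)`. -/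
def ACflat {m n : ℕ} (Cm Cp : Matrix (Fin m) (Fin n) ℂ) :
    Matrix (Fin n ⊕ Fin n) (Fin m ⊕ Fin m) ℂ :=
  Jdg n * (DeltaM Cm Cp)ᴴ * Jdg m

/-- `A = -i Jₙ Ω - (1/2) 𝒞♭ 𝒞` in the annihilation–creation form. -/
def ACA {m n : ℕ} (Cm Cp : Matrix (Fin m) (Fin n) ℂ) (Om Op : Matrix (Fin n) (Fin n) ℂ) :
    Matrix (Fin n ⊕ Fin n) (Fin n ⊕ Fin n) ℂ :=
  (-Complex.I) • (Jdg n * DeltaM Om Op) - (1/2 : ℂ) • (ACflat Cm Cp * DeltaM Cm Cp)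

/-- The annihilation–creation-form transfer function
`G[s] = I + 𝒞 (sI - A)⁻¹ B` with `B = -𝒞♭` (identity scattering matrix). -/
def ACG {m n : ℕ} (Cm Cp : Matrix (Fin m) (Fin n) ℂ) (Om Op : Matrix (Fin n) (Fin n) ℂ)
    (s : ℂ) : Matrix (Fin m ⊕ Fin m) (Fin m ⊕ Fin m) ℂ :=
  1 + DeltaM Cm Cp *
    (s • (1 : Matrix (Fin n ⊕ Fin n) (Fin n ⊕ Fin n) ℂ) - ACA Cm Cp Om Op)⁻¹ *
    (-(ACflat Cm Cp))

/-- for Ω₋ Hermitian and Ω₊ symmetric, the QND interaction condition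
C₋Ω₋ = C₊Ω₊† and C₋Ω₊ = C₊Ω₋ᵀ holds iff Δ(C₋,C₊)·Δ(Ω₋,Ω₊) = 2·Δ(C₋,0)·Δ(Ω₋,Ω₊). -/
theorem stmt14 {m n : ℕ} (Cm Cp : Matrix (Fin m) (Fin n) ℂ)
    (Om Op : Matrix (Fin n) (Fin n) ℂ)
    (hOmHerm : Omᴴ = Om) (hOpSymm : Opᵀ = Op) :
    (Cm * Om = Cp * Opᴴ ∧ Cm * Op = Cp * Omᵀ) ↔
      DeltaM Cm Cp * DeltaM Om Op = (2 : ℂ) • (DeltaM Cm 0 * DeltaM Om Op) := by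
  have hdd : ∀ (A : Matrix (Fin n) (Fin n) ℂ),
      (A.map (starRingEnd ℂ)).map (starRingEnd ℂ) = A := by
    intro A; ext i j; simp [Matrix.map_apply]
  have hOpC : Op.map (starRingEnd ℂ) = Opᴴ := by
    ext i j
    have h : Op j i = Op i j := by
      conv_lhs => rw [← hOpSymm, transpose_apply]
    rw [Matrix.map_apply, conjTranspose_apply, h]
    rfl
  have hOmC : Om.map (starRingEnd ℂ) = Omᵀ := by
    ext i j
    have h : Om j i = star (Om i j) := by
      conv_lhs => rw [← hOmHerm, conjTranspose_apply]
    rw [Matrix.map_apply, transpose_apply, h]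
    rfl
  have h0 : (0 : Matrix (Fin m) (Fin n) ℂ).map (starRingEnd ℂ) = 0 := by
    ext i j; simp [Matrix.map_apply]
  have hmulmap : ∀ (A : Matrix (Fin m) (Fin n) ℂ) (B : Matrix (Fin n) (Fin n) ℂ),
      (A * B).map (starRingEnd ℂ)
        = A.map (starRingEnd ℂ) * B.map (starRingEnd ℂ) := by
    intro A B; exact Matrix.map_mul
  simp only [DeltaM, fromBlocks_multiply, h0, Matrix.zero_mul,
    add_zero, zero_add, fromBlocks_smul, fromBlocks_inj]
  simp only [two_smul]
  constructor
  · rintro ⟨h1, h2⟩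
    rw [← hOpC] at h1
    rw [← hOmC] at h2
    refine ⟨by rw [h1], by rw [h2], ?_, ?_⟩
    · have : Cp.map (starRingEnd ℂ) * Om = (Cm * Op).map (starRingEnd ℂ) := by
        rw [h2, hmulmap, hdd]
      rw [this, hmulmap]
    · have : Cp.map (starRingEnd ℂ) * Op = (Cm * Om).map (starRingEnd ℂ) := by
        rw [h1, hmulmap, hdd]
      rw [this, hmulmap]
  · rintro ⟨h1, h2, -, -⟩
    exact ⟨by rw [hOpC] at h1; exact (add_left_cancel h1).symm,
      by rw [hOmC] at h2; exact (add_left_cancel h2).symm⟩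
end
end

section
/- Let A be an n×n real matrix, C_q an m_q×n real matrix, C_p an m_p×n real matrix, B_q an n×m_q real matrix, and B_p an n×m_p real matrix. Let C be the block matrix obtained by stacking C_q on top of C_p, and let B be the block matrix with blocks B_q and B_p side by side. Assume C·A = (1/2)·C·B·C. Then: (i) C_q·A^k·B_p = 0 for all natural numbers k if and only if C_q·B_p = 0; and (ii) C_p·A^k·B_q = 0 for all natural numbers k if and only if C_p·B_q = 0. -/
open Matrix

/-- Kalman-canonical-form BAE criterion. With C = [Cq; Cp] (stacked)
and B = [Bq, Bp] (side by side) satisfying C·A = (1/2)·C·B·C, one has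
Cq·Aᵏ·Bp = 0 for all k iff Cq·Bp = 0, and Cp·Aᵏ·Bq = 0 for all k iff Cp·Bq = 0. -/
theorem stmt19 {n mq mp : ℕ} (A : Matrix (Fin n) (Fin n) ℝ)
    (Cq : Matrix (Fin mq) (Fin n) ℝ) (Cp : Matrix (Fin mp) (Fin n) ℝ)
    (Bq : Matrix (Fin n) (Fin mq) ℝ) (Bp : Matrix (Fin n) (Fin mp) ℝ)
    (h : fromRows Cq Cp * A =
      (1/2 : ℝ) • (fromRows Cq Cp * fromCols Bq Bp * fromRows Cq Cp)) :
    ((∀ k : ℕ, Cq * A ^ k * Bp = 0) ↔ Cq * Bp = 0) ∧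
    ((∀ k : ℕ, Cp * A ^ k * Bq = 0) ↔ Cp * Bq = 0) := by
  have hb : fromRows Cq Cp * fromCols Bq Bp * fromRows Cq Cp =
      fromRows (Cq * (Bq * Cq + Bp * Cp)) (Cp * (Bq * Cq + Bp * Cp)) := by
    rw [Matrix.mul_assoc, fromCols_mul_fromRows, fromRows_mul]
  rw [hb, fromRows_mul] at h
  have hsm : (1/2 : ℝ) • fromRows (Cq * (Bq * Cq + Bp * Cp)) (Cp * (Bq * Cq + Bp * Cp)) =
      fromRows ((1/2 : ℝ) • (Cq * (Bq * Cq + Bp * Cp))) ((1/2 : ℝ) • (Cp * (Bq * Cq + Bp * Cp))) := by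
    ext i j; cases i <;> simp
  rw [hsm, fromRows_inj.eq_iff] at h
  obtain ⟨hq, hp⟩ := h
  constructor
  · constructor
    · intro hk; have := hk 0; simpa using this
    · intro h0 k
      have key : ∀ k : ℕ, ∃ X : Matrix (Fin mq) (Fin mq) ℝ, Cq * A ^ k = X * Cq := by
        intro k
        induction k with
        | zero => exact ⟨1, by simp⟩
        | succ k ih =>
          obtain ⟨X, hX⟩ := ih
          refine ⟨(1/2 : ℝ) • (X * (Cq * Bq)), ?_⟩
          rw [pow_succ, ← Matrix.mul_assoc, hX, Matrix.mul_assoc X, hq]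
          simp [Matrix.mul_smul, Matrix.smul_mul, Matrix.mul_add,
            ← Matrix.mul_assoc, h0]
      obtain ⟨X, hX⟩ := key k
      rw [hX, Matrix.mul_assoc, h0, Matrix.mul_zero]
  · constructor
    · intro hk; have := hk 0; simpa using this
    · intro h0 k
      have key : ∀ k : ℕ, ∃ X : Matrix (Fin mp) (Fin mp) ℝ, Cp * A ^ k = X * Cp := by
        intro k
        induction k with
        | zero => exact ⟨1, by simp⟩
        | succ k ih =>
          obtain ⟨X, hX⟩ := ih
          refine ⟨(1/2 : ℝ) • (X * (Cp * Bp)), ?_⟩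
          rw [pow_succ, ← Matrix.mul_assoc, hX, Matrix.mul_assoc X, hp]
          simp [Matrix.mul_smul, Matrix.smul_mul, Matrix.mul_add,
            ← Matrix.mul_assoc, h0]
      obtain ⟨X, hX⟩ := key k
      rw [hX, Matrix.mul_assoc, h0, Matrix.mul_zero]
end
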